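/- arXiv:1304.2694 — 2 statements merged into one kernel-verified Lean document; each statement's English description precedes it below -/
import Mathlib

section
/- (Theorem 2(b)) Let P be a G-invariant probability distribution on Ω, let N ≥ 1, and give the sample space Ω^N := (Fin N → Ω) the N-fold product distribution P^N. Define the standard estimator θ̂(s₁,…,s_N) := (1/N) Σ_{i=1}^N 𝟙[s_i ∘ X̂ = x̂] and the Rao-Blackwell estimator θ̂^rb(s₁,…,s_N) := (1/N) Σ_{i=1}^N H(s_i)/M, and let θ := Σ_{s : s ∘ X̂ = x̂} P(s). Then the mean squared error of the Rao-Blackwell estimator is at most that of the standard estimator: Σ_{(s₁,…,s_N) ∈ Ω^N} P^N(s₁,…,s_N) · (θ̂^rb(s₁,…,s_N) − θ)² ≤ Σ_{(s₁,…,s_N) ∈ Ω^N} P^N(s₁,…,s_N) · (θ̂(s₁,…,s_N) − θ)². -/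
open scoped Classical
open Finset

/-- Action of a permutation of `Fin n` on an assignment `s : Fin n → V`:
`(g • s) i := s (g⁻¹ i)`. -/
def permAct {n : ℕ} {V : Type*} (g : Equiv.Perm (Fin n)) (s : Fin n → V) : Fin n → V :=
  fun i => s (g⁻¹ i)

/-- Action of a permutation of `Fin n` on a tuple of indices `X : Fin k → Fin n`:
`(g • X) j := g (X j)`. -/
def tupleAct {n k : ℕ} (g : Equiv.Perm (Fin n)) (X : Fin k → Fin n) : Fin k → Fin n :=
  fun j => g (X j)

/-- The `G`-orbit of a tuple of indices, as a finset. -/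
noncomputable def tupleOrbit {n k : ℕ} (G : Subgroup (Equiv.Perm (Fin n)))
    (X : Fin k → Fin n) : Finset (Fin k → Fin n) :=
  Finset.univ.filter (fun A => ∃ g ∈ G, tupleAct g X = A)

/-- The orbit Hamming weight of `s` w.r.t. the marginal assignment `X̂ = x̂`:
the number of tuples `A` in the `G`-orbit of `X̂` with `s ∘ A = x̂`. -/
noncomputable def orbitHammingWeight {n k : ℕ} {V : Type*} [Fintype V] [DecidableEq V]
    (G : Subgroup (Equiv.Perm (Fin n))) (X : Fin k → Fin n) (xhat : Fin k → V)
    (s : Fin n → V) : ℕ :=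
  ((tupleOrbit G X).filter (fun A => s ∘ A = xhat)).card

/-!
Both estimators are sample means `(1/N) ∑ᵢ q(sᵢ)` of a function of one sample: `q = H / M` for
the Rao-Blackwell estimator and `q = 𝟙[s ∘ X̂ = x̂]` for the standard one. By `G`-invariance of `P`,
every tuple `A` of the orbit satisfies `s ∘ A = x̂` with the same probability `θ`, so both functions
have mean `θ`. For i.i.d. samples the mean squared error of `c ∑ᵢ q(sᵢ)` is
`c² N Var q + ((c N - 1) θ)²`, so it suffices to compare variances: the indicator has variance
`θ (1 - θ)`, and `H / M` takes values in `[0, 1]`, so `E[(H/M)²] ≤ E[H/M] = θ`.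
-/

section ProductWeights

variable {ι Ω : Type*} [Fintype ι] [DecidableEq ι] [Fintype Ω] {P : Ω → ℝ}

theorem sum_pi_prod_mul_prod (g : ι → Ω → ℝ) :
    ∑ ss : ι → Ω, (∏ i, P (ss i)) * ∏ i, g i (ss i) = ∏ i, ∑ s, P s * g i s := by
  simp_rw [← prod_mul_distrib]
  exact (Fintype.prod_sum fun i s => P s * g i s).symm

theorem sum_pi_prod (hP1 : ∑ s, P s = 1) : ∑ ss : ι → Ω, ∏ i, P (ss i) = 1 := by
  simpa [hP1] using sum_pi_prod_mul_prod (P := P) fun (_ : ι) (_ : Ω) => (1 : ℝ)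

theorem sum_pi_prod_mul_apply (hP1 : ∑ s, P s = 1) (q : Ω → ℝ) (i : ι) :
    ∑ ss : ι → Ω, (∏ l, P (ss l)) * q (ss i) = ∑ s, P s * q s := by
  have hfactor : ∀ l, ∑ s, P s * (if l = i then q s else 1) =
      if l = i then ∑ s, P s * q s else 1 := fun l => by split_ifs <;> simp [hP1]
  simpa only [Fintype.prod_ite_eq', hfactor] using
    sum_pi_prod_mul_prod (P := P) fun l s => if l = i then q s else 1

theorem sum_pi_prod_mul_apply_mul_apply (hP1 : ∑ s, P s = 1) (f g : Ω → ℝ) {i j : ι}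
    (hij : i ≠ j) :
    ∑ ss : ι → Ω, (∏ l, P (ss l)) * (f (ss i) * g (ss j)) =
      (∑ s, P s * f s) * ∑ s, P s * g s := by
  have hfactor : ∀ l, ∑ s, P s * ((if l = i then f s else 1) * (if l = j then g s else 1)) =
      (if l = i then ∑ s, P s * f s else 1) * (if l = j then ∑ s, P s * g s else 1) := by
    intro l
    by_cases hi : l = i
    · subst hi; simp [hij]
    · split_ifs <;> simp [hP1]
  simpa only [prod_mul_distrib, Fintype.prod_ite_eq', hfactor] using
    sum_pi_prod_mul_prod (P := P) fun l s => (if l = i then f s else 1) * (if l = j then g s else 1)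

theorem sum_pi_prod_mul_mul_sum_sub_sq (hP1 : ∑ s, P s = 1) {q : Ω → ℝ} {θ : ℝ}
    (hq : ∑ s, P s * q s = θ) (c : ℝ) :
    ∑ ss : ι → Ω, (∏ i, P (ss i)) * (c * ∑ i, q (ss i) - θ) ^ 2 =
      c ^ 2 * Fintype.card ι * ∑ s, P s * (q s - θ) ^ 2 + ((c * Fintype.card ι - 1) * θ) ^ 2 := by
  set u : Ω → ℝ := fun s => q s - θ
  set b : ℝ := (c * Fintype.card ι - 1) * θ
  have hu : ∑ s, P s * u s = 0 := by simp [u, mul_sub, sum_sub_distrib, hq, ← sum_mul, hP1]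
  have hcov : ∀ i j : ι, ∑ ss : ι → Ω, (∏ l, P (ss l)) * (u (ss i) * u (ss j)) =
      if i = j then ∑ s, P s * u s ^ 2 else 0 := by
    intro i j
    split_ifs with hij
    · subst hij; simpa only [sq] using sum_pi_prod_mul_apply hP1 (fun s => u s * u s) i
    · rw [sum_pi_prod_mul_apply_mul_apply hP1 u u hij, hu, zero_mul]
  have hsum_sq : ∑ ss : ι → Ω, (∏ l, P (ss l)) * (∑ i, u (ss i)) ^ 2 =
      Fintype.card ι * ∑ s, P s * u s ^ 2 := by
    calc ∑ ss : ι → Ω, (∏ l, P (ss l)) * (∑ i, u (ss i)) ^ 2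
        = ∑ i, ∑ j, ∑ ss : ι → Ω, (∏ l, P (ss l)) * (u (ss i) * u (ss j)) := by
          simp_rw [sq, sum_mul_sum, mul_sum]
          rw [sum_comm]
          exact sum_congr rfl fun i _ => sum_comm
      _ = Fintype.card ι * ∑ s, P s * u s ^ 2 := by simp [hcov]
  have hsum : ∑ ss : ι → Ω, (∏ l, P (ss l)) * ∑ i, u (ss i) = 0 := by
    simp_rw [mul_sum]
    rw [sum_comm]
    simp [sum_pi_prod_mul_apply hP1, hu]
  have hexpand : ∀ ss : ι → Ω, (∏ i, P (ss i)) * (c * ∑ i, q (ss i) - θ) ^ 2 =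
      c ^ 2 * ((∏ l, P (ss l)) * (∑ i, u (ss i)) ^ 2) +
        2 * c * b * ((∏ l, P (ss l)) * ∑ i, u (ss i)) + b ^ 2 * ∏ l, P (ss l) := by
    intro ss
    have hcenter : c * ∑ i, q (ss i) - θ = c * ∑ i, u (ss i) + b := by
      simp only [u, b, sum_sub_distrib, sum_const, card_univ, nsmul_eq_mul]; ring
    rw [hcenter]
    ring
  simp_rw [hexpand, sum_add_distrib, ← mul_sum, hsum_sq, hsum, sum_pi_prod hP1]
  ring

theorem sum_pi_prod_mul_mul_sum_sub_sq_le (hP1 : ∑ s, P s = 1) {f h : Ω → ℝ} {θ : ℝ}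
    (hf : ∑ s, P s * f s = θ) (hh : ∑ s, P s * h s = θ)
    (hvar : ∑ s, P s * (f s - θ) ^ 2 ≤ ∑ s, P s * (h s - θ) ^ 2) (c : ℝ) :
    ∑ ss : ι → Ω, (∏ i, P (ss i)) * (c * ∑ i, f (ss i) - θ) ^ 2 ≤
      ∑ ss : ι → Ω, (∏ i, P (ss i)) * (c * ∑ i, h (ss i) - θ) ^ 2 := by
  rw [sum_pi_prod_mul_mul_sum_sub_sq hP1 hf, sum_pi_prod_mul_mul_sum_sub_sq hP1 hh]
  gcongr

end ProductWeights

section Variance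

variable {Ω : Type*} [Fintype Ω] {P : Ω → ℝ}

theorem sum_mul_sub_sq_eq (hP1 : ∑ s, P s = 1) {q : Ω → ℝ} {θ : ℝ}
    (hq : ∑ s, P s * q s = θ) :
    ∑ s, P s * (q s - θ) ^ 2 = ∑ s, P s * q s ^ 2 - θ ^ 2 := by
  have hexpand : ∀ s, P s * (q s - θ) ^ 2 = P s * q s ^ 2 - 2 * θ * (P s * q s) + θ ^ 2 * P s :=
    fun s => by ring
  simp only [hexpand, sum_add_distrib, sum_sub_distrib, ← mul_sum, hq, hP1]
  ring

theorem sum_mul_sub_sq_le_of_mem_Icc (hP0 : ∀ s, 0 ≤ P s) (hP1 : ∑ s, P s = 1) {q : Ω → ℝ}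
    {θ : ℝ} (hq01 : ∀ s, q s ∈ Set.Icc 0 1) (hq : ∑ s, P s * q s = θ) :
    ∑ s, P s * (q s - θ) ^ 2 ≤ θ * (1 - θ) := by
  have hsq : ∑ s, P s * q s ^ 2 ≤ ∑ s, P s * q s :=
    sum_le_sum fun s _ => mul_le_mul_of_nonneg_left (sq_le (hq01 s).1 (hq01 s).2) (hP0 s)
  rw [sum_mul_sub_sq_eq hP1 hq]
  linarith

theorem sum_mul_ite_sub_sq (hP1 : ∑ s, P s = 1) (p : Ω → Prop) [DecidablePred p] :
    ∑ s, P s * ((if p s then 1 else 0) - ∑ t ∈ univ.filter p, P t) ^ 2 =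
      (∑ t ∈ univ.filter p, P t) * (1 - ∑ t ∈ univ.filter p, P t) := by
  have hmean : ∑ s, P s * (if p s then 1 else 0) = ∑ t ∈ univ.filter p, P t := by
    simp [sum_filter]
  rw [sum_mul_sub_sq_eq hP1 hmean]
  simp only [ite_pow, one_pow, zero_pow two_ne_zero, hmean]
  ring

end Variance

section Orbit

variable {n k : ℕ} {V : Type*}

theorem permAct_comp_tupleAct (g : Equiv.Perm (Fin n)) (s : Fin n → V) (X : Fin k → Fin n) :
    permAct g s ∘ tupleAct g X = s ∘ X := by
  funext j
  simp [permAct, tupleAct]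

theorem sum_permAct [Fintype V] {β : Type*} [AddCommMonoid β] (g : Equiv.Perm (Fin n))
    (F : (Fin n → V) → β) : ∑ s, F (permAct g s) = ∑ s, F s :=
  Fintype.sum_equiv (g.arrowCongr (Equiv.refl V)) _ _ fun _ => rfl

theorem mem_tupleOrbit_self (G : Subgroup (Equiv.Perm (Fin n))) (X : Fin k → Fin n) :
    X ∈ tupleOrbit G X := by
  simp only [tupleOrbit, mem_filter, mem_univ, true_and]
  exact ⟨1, G.one_mem, rfl⟩

variable [Fintype V] [DecidableEq V] {G : Subgroup (Equiv.Perm (Fin n))} {P : (Fin n → V) → ℝ}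

theorem sum_filter_comp_eq_of_mem_tupleOrbit (hPG : ∀ g ∈ G, ∀ s, P (permAct g s) = P s)
    {X A : Fin k → Fin n} (hA : A ∈ tupleOrbit G X) (x : Fin k → V) :
    ∑ s ∈ univ.filter (fun s : Fin n → V => s ∘ A = x), P s =
      ∑ s ∈ univ.filter (fun s : Fin n → V => s ∘ X = x), P s := by
  obtain ⟨g, hg, rfl⟩ := (mem_filter.1 hA).2
  rw [sum_filter, sum_filter, ← sum_permAct g]
  simp only [permAct_comp_tupleAct, hPG g hg]

theorem sum_mul_orbitHammingWeight (hPG : ∀ g ∈ G, ∀ s, P (permAct g s) = P s)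
    (X : Fin k → Fin n) (x : Fin k → V) :
    ∑ s, P s * (orbitHammingWeight G X x s : ℝ) =
      (tupleOrbit G X).card * ∑ s ∈ univ.filter (fun s : Fin n → V => s ∘ X = x), P s := by
  calc ∑ s, P s * (orbitHammingWeight G X x s : ℝ)
      = ∑ A ∈ tupleOrbit G X, ∑ s ∈ univ.filter (fun s : Fin n → V => s ∘ A = x), P s := by
        simp only [orbitHammingWeight, card_filter, Nat.cast_sum, mul_sum]
        rw [sum_comm]
        simp [sum_filter]
    _ = (tupleOrbit G X).card * ∑ s ∈ univ.filter (fun s : Fin n → V => s ∘ X = x), P s := by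
        rw [sum_congr rfl fun A hA => sum_filter_comp_eq_of_mem_tupleOrbit hPG hA x, sum_const,
          nsmul_eq_mul]

theorem orbitHammingWeight_le_card (X : Fin k → Fin n) (x : Fin k → V) (s : Fin n → V) :
    orbitHammingWeight G X x s ≤ (tupleOrbit G X).card :=
  card_filter_le _ _

end Orbit

theorem rao_blackwell_mse_le_standard_mse_general
    (n k : ℕ)
    (V : Type*) [Fintype V] [DecidableEq V]
    (G : Subgroup (Equiv.Perm (Fin n)))
    (Xhat : Fin k → Fin n)
    (xhat : Fin k → V)
    (P : (Fin n → V) → ℝ)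
    (hP0 : ∀ s, 0 ≤ P s)
    (hP1 : ∑ s : Fin n → V, P s = 1)
    (hPG : ∀ g ∈ G, ∀ s : Fin n → V, P (permAct g s) = P s)
    (N : ℕ) :
    ∑ ss : Fin N → (Fin n → V),
        (∏ i, P (ss i)) *
          ((1 / (N : ℝ)) * (∑ i, (orbitHammingWeight G Xhat xhat (ss i) : ℝ) /
              ((tupleOrbit G Xhat).card : ℝ)) -
            ∑ s ∈ Finset.univ.filter (fun s : Fin n → V => s ∘ Xhat = xhat), P s) ^ 2 ≤
      ∑ ss : Fin N → (Fin n → V),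
        (∏ i, P (ss i)) *
          ((1 / (N : ℝ)) * (∑ i, if ss i ∘ Xhat = xhat then (1 : ℝ) else 0) -
            ∑ s ∈ Finset.univ.filter (fun s : Fin n → V => s ∘ Xhat = xhat), P s) ^ 2 := by
  have hM : 0 < (tupleOrbit G Xhat).card := card_pos.2 ⟨Xhat, mem_tupleOrbit_self G Xhat⟩
  have hrb_mean : ∑ s, P s * (orbitHammingWeight G Xhat xhat s / ((tupleOrbit G Xhat).card : ℝ))
      = ∑ s ∈ univ.filter (fun s : Fin n → V => s ∘ Xhat = xhat), P s := by
    simp_rw [mul_div_assoc', ← sum_div, sum_mul_orbitHammingWeight hPG]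
    field_simp
  have hrb_mem : ∀ s, (orbitHammingWeight G Xhat xhat s : ℝ) / (tupleOrbit G Xhat).card ∈
      Set.Icc 0 1 := fun s =>
    ⟨by positivity, div_le_one_of_le₀ (mod_cast orbitHammingWeight_le_card Xhat xhat s)
      (Nat.cast_nonneg _)⟩
  have hstd_mean : ∑ s, P s * (if s ∘ Xhat = xhat then 1 else 0) =
      ∑ s ∈ univ.filter (fun s : Fin n → V => s ∘ Xhat = xhat), P s := by
    simp [sum_filter]
  refine sum_pi_prod_mul_mul_sum_sub_sq_le hP1 hrb_mean hstd_mean ?_ (1 / (N : ℝ))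
  rw [sum_mul_ite_sub_sq hP1]
  exact sum_mul_sub_sq_le_of_mem_Icc hP0 hP1 hrb_mem hrb_mean

/-- Theorem 2(b): the mean squared error of the Rao-Blackwell estimator is
at most that of the standard estimator, for `N` i.i.d. sample points drawn from a
`G`-invariant distribution `P`. -/
theorem rao_blackwell_mse_le_standard_mse
    (n k : ℕ) (hn : 0 < n) (hk : 0 < k)
    (V : Type*) [Fintype V] [Nonempty V] [DecidableEq V]
    (G : Subgroup (Equiv.Perm (Fin n)))
    (Xhat : Fin k → Fin n) (hX : Function.Injective Xhat)
    (xhat : Fin k → V)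
    (P : (Fin n → V) → ℝ)
    (hP0 : ∀ s, 0 ≤ P s)
    (hP1 : ∑ s : Fin n → V, P s = 1)
    (hPG : ∀ g ∈ G, ∀ s : Fin n → V, P (permAct g s) = P s)
    (N : ℕ) (hN : 1 ≤ N) :
    ∑ ss : Fin N → (Fin n → V),
        (∏ i, P (ss i)) *
          ((1 / (N : ℝ)) * (∑ i, (orbitHammingWeight G Xhat xhat (ss i) : ℝ) /
              ((tupleOrbit G Xhat).card : ℝ)) -
            ∑ s ∈ Finset.univ.filter (fun s : Fin n → V => s ∘ Xhat = xhat), P s) ^ 2 ≤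
      ∑ ss : Fin N → (Fin n → V),
        (∏ i, P (ss i)) *
          ((1 / (N : ℝ)) * (∑ i, if ss i ∘ Xhat = xhat then (1 : ℝ) else 0) -
            ∑ s ∈ Finset.univ.filter (fun s : Fin n → V => s ∘ Xhat = xhat), P s) ^ 2 :=
  rao_blackwell_mse_le_standard_mse_general n k V G Xhat xhat P hP0 hP1 hPG N
end

section
/- (Proposition 3, mixing time part) Let Q be a G-invariant row-stochastic matrix on a finite state space Ω with quotient matrix Q' on the set 𝒪 of G-orbits, let π be a probability vector on Ω with lumped vector π'(O) := Σ_{x ∈ O} π(x), and fix ε > 0. Define the mixing time τ(ε) of Q as the least T ∈ ℕ such that for all x ∈ Ω and all t ≥ T, (1/2) Σ_{y ∈ Ω} |Q^t(x,y) − π(y)| ≤ ε, and define the mixing time τ'(ε) of Q' analogously with respect to π'. If τ(ε) exists, then τ'(ε) exists and τ'(ε) ≤ τ(ε). -/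
/-! For `G`-invariant `Q`, lumping commutes with taking powers: `(Q')^t([x], O)` is the mass
that `Q^t(x, ·)` puts on the orbit `O`. The lumped distance from `[x]` to `π'` is therefore a
sum over orbits of `|Σ_{y ∈ O} (Q^t(x, y) - π(y))|`, which the triangle inequality bounds by
the distance from `x` to `π`. So every burn-in time valid for `Q` is valid for `Q'`, and the
least one for `Q'` exists and is at most `τ(ε)`. -/

open scoped Classical
open Finset

/-- The `t`-th power of a matrix on a finite type:
`Q^0 = identity`, `Q^{t+1}(x,z) = Σ_y Q^t(x,y) · Q(y,z)`. -/
noncomputable def matPow {α : Type*} [Fintype α] (Q : α → α → ℝ) : ℕ → α → α → ℝ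
  | 0 => fun x y => if x = y then 1 else 0
  | t + 1 => fun x z => ∑ y, matPow Q t x y * Q y z

/-- The quotient (lumped) matrix of `Q` on the set of `G`-orbits:
`Q'([x], O) := Σ_{y ∈ O} Q(x, y)`, using the canonical representative of each orbit
(this is independent of the representative when `Q` is `G`-invariant, by exact
lumpability). -/
noncomputable def quotMat (G : Type*) {Ω : Type*} [Group G] [MulAction G Ω] [Fintype Ω]
    (Q : Ω → Ω → ℝ) (a b : Quotient (MulAction.orbitRel G Ω)) : ℝ :=
  ∑ y ∈ Finset.univ.filter
      (fun y : Ω => (⟦y⟧ : Quotient (MulAction.orbitRel G Ω)) = b),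
    Q a.out y

/-- The lumped vector of `π` on the set of `G`-orbits: `π'(O) := Σ_{x ∈ O} π(x)`. -/
noncomputable def lumpVec (G : Type*) {Ω : Type*} [Group G] [MulAction G Ω] [Fintype Ω]
    (π : Ω → ℝ) (a : Quotient (MulAction.orbitRel G Ω)) : ℝ :=
  ∑ x ∈ Finset.univ.filter
      (fun x : Ω => (⟦x⟧ : Quotient (MulAction.orbitRel G Ω)) = a),
    π x

open MulAction

section Lumping

variable {G Ω : Type*} [Group G] [MulAction G Ω] [Fintype Ω]

theorem sum_orbit_smul_left {Q : Ω → Ω → ℝ}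
    (hQG : ∀ (g : G) (x y : Ω), Q (g • x) (g • y) = Q x y)
    (g : G) (x : Ω) (b : orbitRel.Quotient G Ω) :
    ∑ y with (⟦y⟧ : orbitRel.Quotient G Ω) = b, Q (g • x) y =
      ∑ y with (⟦y⟧ : orbitRel.Quotient G Ω) = b, Q x y := by
  simp only [Finset.sum_filter]
  rw [← Fintype.sum_equiv (MulAction.toPerm g) _ _ fun _ => rfl]
  simp [hQG]

theorem quotMat_mk {Q : Ω → Ω → ℝ}
    (hQG : ∀ (g : G) (x y : Ω), Q (g • x) (g • y) = Q x y)
    (x : Ω) (b : orbitRel.Quotient G Ω) :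
    quotMat G Q ⟦x⟧ b = ∑ y with (⟦y⟧ : orbitRel.Quotient G Ω) = b, Q x y := by
  obtain ⟨g, hg⟩ : (⟦x⟧ : orbitRel.Quotient G Ω).out ∈ orbit G x :=
    Quotient.mk_out (s := orbitRel G Ω) x
  rw [quotMat, ← hg]
  exact sum_orbit_smul_left hQG g x b

theorem matPow_quotMat_mk {Q : Ω → Ω → ℝ}
    (hlump : ∀ x b, quotMat G Q ⟦x⟧ b = ∑ y with (⟦y⟧ : orbitRel.Quotient G Ω) = b, Q x y)
    (t : ℕ) (x : Ω) (b : orbitRel.Quotient G Ω) :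
    matPow (quotMat G Q) t ⟦x⟧ b =
      ∑ y with (⟦y⟧ : orbitRel.Quotient G Ω) = b, matPow Q t x y := by
  induction t generalizing b with
  | zero => simp [matPow, Finset.sum_ite_eq]
  | succ t ih =>
    calc ∑ c, matPow (quotMat G Q) t ⟦x⟧ c * quotMat G Q c b
        = ∑ c, ∑ y with (⟦y⟧ : orbitRel.Quotient G Ω) = c,
            matPow Q t x y * ∑ z with (⟦z⟧ : orbitRel.Quotient G Ω) = b, Q y z := by
          refine Finset.sum_congr rfl fun c _ => ?_
          rw [ih, Finset.sum_mul]
          refine Finset.sum_congr rfl fun y hy => ?_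
          rw [← (Finset.mem_filter_univ y).mp hy, hlump]
      _ = ∑ y, matPow Q t x y * ∑ z with (⟦z⟧ : orbitRel.Quotient G Ω) = b, Q y z :=
          Finset.sum_fiberwise _ _ _
      _ = ∑ z with (⟦z⟧ : orbitRel.Quotient G Ω) = b, ∑ y, matPow Q t x y * Q y z := by
          simp_rw [Finset.mul_sum]
          exact Finset.sum_comm

theorem sum_abs_matPow_quotMat_sub_lumpVec_le {Q : Ω → Ω → ℝ}
    (hlump : ∀ x b, quotMat G Q ⟦x⟧ b = ∑ y with (⟦y⟧ : orbitRel.Quotient G Ω) = b, Q x y)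
    (π : Ω → ℝ) (t : ℕ) (x : Ω) :
    ∑ b, |matPow (quotMat G Q) t ⟦x⟧ b - lumpVec G π b| ≤ ∑ y, |matPow Q t x y - π y| := by
  rw [← Finset.sum_fiberwise Finset.univ (fun y : Ω => (⟦y⟧ : orbitRel.Quotient G Ω))]
  refine Finset.sum_le_sum fun b _ => ?_
  rw [matPow_quotMat_mk hlump, lumpVec, ← Finset.sum_sub_distrib]
  exact Finset.abs_sum_le_sum_abs _ _

end Lumping

theorem Nat.exists_isLeast_le {S : Set ℕ} {n : ℕ} (hn : n ∈ S) : ∃ m, IsLeast S m ∧ m ≤ n :=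
  ⟨sInf S, ⟨Nat.sInf_mem ⟨n, hn⟩, fun _ hm => Nat.sInf_le hm⟩, Nat.sInf_le hn⟩

theorem quotient_mixing_time_le_mixing_time_general
    {G Ω : Type*} [Group G] [Fintype Ω] [MulAction G Ω]
    (Q : Ω → Ω → ℝ)
    (hQG : ∀ (g : G) (x y : Ω), Q (g • x) (g • y) = Q x y)
    (π : Ω → ℝ)
    (ε : ℝ)
    (T : ℕ)
    (hT : IsLeast {T₀ : ℕ | ∀ x : Ω, ∀ t ≥ T₀,
      (1 / 2) * ∑ y : Ω, |matPow Q t x y - π y| ≤ ε} T) :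
    ∃ T' : ℕ,
      IsLeast {T₀ : ℕ | ∀ a : Quotient (MulAction.orbitRel G Ω), ∀ t ≥ T₀,
        (1 / 2) * ∑ b : Quotient (MulAction.orbitRel G Ω),
          |matPow (quotMat G Q) t a b - lumpVec G π b| ≤ ε} T' ∧
      T' ≤ T := by
  refine Nat.exists_isLeast_le fun a t ht => ?_
  rw [← Quotient.out_eq a]
  have hcontract := sum_abs_matPow_quotMat_sub_lumpVec_le (quotMat_mk hQG) π t a.out
  linarith [hT.1 a.out t ht]

/-- Proposition 3, mixing time part: if the mixing time `τ(ε)` of `Q`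
(w.r.t. `π`) exists, then the mixing time `τ'(ε)` of the quotient matrix (w.r.t. the
lumped vector `π'`) exists and `τ'(ε) ≤ τ(ε)`. Mixing times are expressed as least
elements of the corresponding sets of valid burn-in times. -/
theorem quotient_mixing_time_le_mixing_time
    {G Ω : Type*} [Group G] [Fintype G] [Fintype Ω] [Nonempty Ω] [MulAction G Ω]
    (Q : Ω → Ω → ℝ)
    (hQ0 : ∀ x y, 0 ≤ Q x y)
    (hQ1 : ∀ x, ∑ y, Q x y = 1)
    (hQG : ∀ (g : G) (x y : Ω), Q (g • x) (g • y) = Q x y)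
    (π : Ω → ℝ)
    (hπ0 : ∀ x, 0 ≤ π x)
    (hπ1 : ∑ x, π x = 1)
    (ε : ℝ) (hε : 0 < ε)
    (T : ℕ)
    (hT : IsLeast {T₀ : ℕ | ∀ x : Ω, ∀ t ≥ T₀,
      (1 / 2) * ∑ y : Ω, |matPow Q t x y - π y| ≤ ε} T) :
    ∃ T' : ℕ,
      IsLeast {T₀ : ℕ | ∀ a : Quotient (MulAction.orbitRel G Ω), ∀ t ≥ T₀,
        (1 / 2) * ∑ b : Quotient (MulAction.orbitRel G Ω),
          |matPow (quotMat G Q) t a b - lumpVec G π b| ≤ ε} T' ∧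
      T' ≤ T :=
  quotient_mixing_time_le_mixing_time_general Q hQG π ε T hT
end
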